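/- The function h is convex, Lipschitz continuous, its second derivative h'' is bounded, and h(y) = 0 for all y ≥ a. -/

import Mathlib

open MeasureTheory Real Filter Set
open scoped ENNReal NNReal

noncomputable section

/-- The unnormalized density of `ν_m`: `x ↦ exp(−(1/σ²)[V(x) + (x−m)²/2])`. -/
def nuDens (σ : ℝ) (V : ℝ → ℝ) (m x : ℝ) : ℝ :=
  Real.exp (-(1 / σ ^ 2) * (V x + (x - m) ^ 2 / 2))

/-- The mean of `ν_m`: `f(m) = ∫ x ν_m(dx)`. -/
def fFun (σ : ℝ) (V : ℝ → ℝ) (m : ℝ) : ℝ :=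
  (∫ x, x * nuDens σ V m x) / ∫ x, nuDens σ V m x

open MeasureTheory Real Set

lemma aux_int_gauss {b : ℝ} (hb : 0 < b) (n : ℕ) :
    Integrable fun x : ℝ => |x| ^ n * Real.exp (-b * x ^ 2) := by
  have hs : (-1 : ℝ) < n := by exact_mod_cast neg_one_lt_zero.trans_le (Nat.cast_nonneg n)
  have h := integrable_rpow_mul_exp_neg_mul_sq hb hs
  rw [← integrableOn_univ, ← @Iio_union_Ici _ _ (0 : ℝ), integrableOn_union,
    integrableOn_Ici_iff_integrableOn_Ioi]
  constructor
  · rw [← (Measure.measurePreserving_neg (volume : Measure ℝ)).integrableOn_comp_preimage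
      (Homeomorph.neg ℝ).measurableEmbedding]
    simp only [Function.comp_def, neg_sq, neg_preimage, neg_Iio, neg_neg, neg_zero, abs_neg]
    refine (h.integrableOn.congr_fun (fun x hx => ?_) measurableSet_Ioi)
    rw [abs_of_pos hx, ← Real.rpow_natCast x n]
  · refine (h.integrableOn.congr_fun (fun x hx => ?_) measurableSet_Ioi)
    rw [abs_of_pos hx, ← Real.rpow_natCast x n]

lemma aux_int_gauss' {b : ℝ} (hb : 0 < b) (n : ℕ) (m : ℝ) :
    Integrable fun x : ℝ => |x - m| ^ n * Real.exp (-b * (x - m) ^ 2) :=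
  (aux_int_gauss hb n).comp_sub_right m

lemma aux_int_gauss'' {b : ℝ} (hb : 0 < b) (n : ℕ) (m : ℝ) :
    Integrable fun x : ℝ => (1 + |x - m| ^ n) * Real.exp (-b * (x - m) ^ 2) := by
  have h0 : Integrable fun x : ℝ => Real.exp (-b * (x - m) ^ 2) :=
    (integrable_exp_neg_mul_sq hb).comp_sub_right m
  refine (h0.add (aux_int_gauss' hb n m)).congr (Filter.Eventually.of_forall fun x => ?_)
  simp only [Pi.add_apply]; ring

lemma aux_one_add_pow_le {u : ℝ} (hu : 0 ≤ u) (n : ℕ) : (1 + u) ^ n ≤ 2 ^ n * (1 + u ^ n) := by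
  rcases le_total u 1 with h | h
  · calc (1 + u) ^ n ≤ 2 ^ n := by
          apply pow_le_pow_left₀ (by linarith) (by linarith)
        _ ≤ 2 ^ n * (1 + u ^ n) := by
          nlinarith [pow_nonneg hu n, pow_pos (show (0:ℝ) < 2 by norm_num) n]
  · calc (1 + u) ^ n ≤ (2 * u) ^ n := by
          apply pow_le_pow_left₀ (by linarith) (by linarith)
        _ = 2 ^ n * u ^ n := mul_pow 2 u n
        _ ≤ 2 ^ n * (1 + u ^ n) := by
          nlinarith [pow_pos (show (0:ℝ) < 2 by norm_num) n, pow_nonneg hu n]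

noncomputable section

/-- A generic unnormalized Gibbs density. -/
def gdens (k : ℝ) (V : ℝ → ℝ) (m x : ℝ) : ℝ := Real.exp (-k * (V x + (x - m) ^ 2 / 2))

/-- Moments of the unnormalized density. -/
def Ig (k : ℝ) (V : ℝ → ℝ) (n : ℕ) (m : ℝ) : ℝ := ∫ x, x ^ n * gdens k V m x

section core

variable {V : ℝ → ℝ} {k C₀ : ℝ}

lemma gdens_pos (m x : ℝ) : 0 < gdens k V m x := Real.exp_pos _

lemma gdens_cont (hV : Continuous V) (m : ℝ) : Continuous (gdens k V m) := by
  unfold gdens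
  exact (continuous_const.mul
    (hV.add (((continuous_id.sub continuous_const).pow 2).div_const 2))).rexp

lemma gdens_cont' (hV : Continuous V) (x : ℝ) : Continuous fun m => gdens k V m x := by
  unfold gdens
  exact (continuous_const.mul
    (continuous_const.add (((continuous_const.sub continuous_id).pow 2).div_const 2))).rexp

lemma gdens_le (hC₀ : ∀ x, C₀ ≤ V x) (hk : 0 < k) (m x : ℝ) :
    gdens k V m x ≤ Real.exp (-k * C₀) * Real.exp (-(k / 2) * (x - m) ^ 2) := by
  rw [gdens, ← Real.exp_add]
  apply Real.exp_le_exp.2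
  have h := hC₀ x
  nlinarith [sq_nonneg (x - m), mul_nonneg hk.le (sub_nonneg.2 h)]

lemma gdens_le' (hC₀ : ∀ x, C₀ ≤ V x) (hk : 0 < k) {m₀ m : ℝ} (hm : |m - m₀| ≤ 1) (x : ℝ) :
    gdens k V m x ≤ Real.exp (-k * C₀ + k) * Real.exp (-(k / 4) * (x - m₀) ^ 2) := by
  rw [gdens, ← Real.exp_add]
  apply Real.exp_le_exp.2
  have h := hC₀ x
  have hs2 : (m - m₀) ^ 2 ≤ 1 := by nlinarith [abs_nonneg (m - m₀), sq_abs (m - m₀)]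
  nlinarith [sq_nonneg ((x - m₀) / 2 - (m - m₀)), mul_nonneg hk.le (sub_nonneg.2 h),
    mul_nonneg hk.le (sq_nonneg ((x - m₀) / 2 - (m - m₀))),
    mul_nonneg hk.le (sub_nonneg.2 hs2)]

lemma abs_le_aux (m x : ℝ) : |x| ≤ (1 + |m|) * (1 + |x - m|) := by
  have h := abs_sub_abs_le_abs_sub x m
  have h1 : (0:ℝ) ≤ |m| := abs_nonneg m
  have h2 : (0:ℝ) ≤ |x - m| := abs_nonneg (x - m)
  nlinarith [mul_nonneg h1 h2]

lemma norm_xn_gdens_le (hC₀ : ∀ x, C₀ ≤ V x) (hk : 0 < k) (n : ℕ) {m₀ m : ℝ}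
    (hm : |m - m₀| ≤ 1) (x : ℝ) :
    ‖x ^ n * gdens k V m x‖ ≤ ((2 + |m₀|) ^ n * 2 ^ n * Real.exp (-k * C₀ + k)) *
      ((1 + |x - m₀| ^ n) * Real.exp (-(k / 4) * (x - m₀) ^ 2)) := by
  have hg0 : 0 < gdens k V m x := gdens_pos m x
  have hxb : |x| ≤ (2 + |m₀|) * (1 + |x - m₀|) := by
    have h := abs_le_aux m₀ x
    have h2 : (0:ℝ) ≤ 1 + |x - m₀| := by positivity
    nlinarith [abs_nonneg m₀, abs_nonneg (x - m₀)]
  calc ‖x ^ n * gdens k V m x‖ = |x| ^ n * gdens k V m x := by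
        rw [norm_mul, norm_pow, Real.norm_eq_abs, Real.norm_eq_abs, abs_of_pos hg0]
    _ ≤ ((2 + |m₀|) * (1 + |x - m₀|)) ^ n *
        (Real.exp (-k * C₀ + k) * Real.exp (-(k / 4) * (x - m₀) ^ 2)) := by
        apply mul_le_mul (pow_le_pow_left₀ (abs_nonneg x) hxb n) (gdens_le' hC₀ hk hm x)
          hg0.le (by positivity)
    _ = (2 + |m₀|) ^ n * ((1 + |x - m₀|) ^ n *
        (Real.exp (-k * C₀ + k) * Real.exp (-(k / 4) * (x - m₀) ^ 2))) := by
        rw [mul_pow]; ring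
    _ ≤ (2 + |m₀|) ^ n * ((2 ^ n * (1 + |x - m₀| ^ n)) *
        (Real.exp (-k * C₀ + k) * Real.exp (-(k / 4) * (x - m₀) ^ 2))) := by
        apply mul_le_mul_of_nonneg_left _ (by positivity)
        apply mul_le_mul_of_nonneg_right (aux_one_add_pow_le (abs_nonneg _) n) (by positivity)
    _ = ((2 + |m₀|) ^ n * 2 ^ n * Real.exp (-k * C₀ + k)) *
        ((1 + |x - m₀| ^ n) * Real.exp (-(k / 4) * (x - m₀) ^ 2)) := by ring

lemma int_xn_gdens (hV : Continuous V) (hC₀ : ∀ x, C₀ ≤ V x) (hk : 0 < k) (n : ℕ) (m : ℝ) :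
    Integrable fun x => x ^ n * gdens k V m x := by
  refine Integrable.mono' (((aux_int_gauss'' (by positivity : (0:ℝ) < k / 4) n m).const_mul
    ((2 + |m|) ^ n * 2 ^ n * Real.exp (-k * C₀ + k)))) ?_ ?_
  · exact ((continuous_pow n).mul (gdens_cont hV m)).aestronglyMeasurable
  · exact Filter.Eventually.of_forall fun x =>
      norm_xn_gdens_le hC₀ hk n (by simp : |m - m| ≤ 1) x

lemma hasDerivAt_Ig (hV : Continuous V) (hC₀ : ∀ x, C₀ ≤ V x) (hk : 0 < k) (n : ℕ) (m₀ : ℝ) :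
    HasDerivAt (Ig k V n) (k * Ig k V (n + 1) m₀ - k * m₀ * Ig k V n m₀) m₀ := by
  have key := hasDerivAt_integral_of_dominated_loc_of_deriv_le (μ := volume)
    (F := fun m x => x ^ n * gdens k V m x)
    (F' := fun m x => (x ^ n * (k * (x - m))) * gdens k V m x) (x₀ := m₀)
    (bound := fun x => (k * ((2 + |m₀|) ^ (n + 1) * 2 ^ (n + 1) * Real.exp (-k * C₀ + k))) *
      ((1 + |x - m₀| ^ (n + 1)) * Real.exp (-(k / 4) * (x - m₀) ^ 2)))
    (s := Metric.ball m₀ 1) (Metric.ball_mem_nhds m₀ one_pos)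
    (Filter.Eventually.of_forall fun m =>
      ((continuous_pow n).mul (gdens_cont hV m)).aestronglyMeasurable)
    (int_xn_gdens hV hC₀ hk n m₀)
    (((continuous_pow n).mul ((continuous_const.mul
      (continuous_id.sub continuous_const)))).mul (gdens_cont hV m₀)).aestronglyMeasurable
    ?_ ?_ ?_
  · have h2 := key.2
    have heq : (∫ x, (x ^ n * (k * (x - m₀))) * gdens k V m₀ x) =
        k * Ig k V (n + 1) m₀ - k * m₀ * Ig k V n m₀ := by
      have e : (fun x => (x ^ n * (k * (x - m₀))) * gdens k V m₀ x) =
          fun x => k * (x ^ (n + 1) * gdens k V m₀ x) -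
            (k * m₀) * (x ^ n * gdens k V m₀ x) := by
        funext x; rw [pow_succ]; ring
      rw [e, integral_sub ((int_xn_gdens hV hC₀ hk (n + 1) m₀).const_mul k)
        ((int_xn_gdens hV hC₀ hk n m₀).const_mul (k * m₀)),
        integral_const_mul, integral_const_mul]
      rfl
    rw [heq] at h2
    exact h2
  · -- bound
    refine Filter.Eventually.of_forall fun x => fun m hm => ?_
    have hm1 : |m - m₀| ≤ 1 := by
      have := Metric.mem_ball.1 hm
      rw [Real.dist_eq] at this
      linarith
    have hxm : |x - m| ≤ (2 + |m₀|) * (1 + |x - m₀|) := by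
      have h1 : |x - m| ≤ |x - m₀| + |m₀ - m| := abs_sub_le x m₀ m
      have h2 : |m₀ - m| = |m - m₀| := abs_sub_comm m₀ m
      nlinarith [abs_nonneg m₀, abs_nonneg (x - m₀)]
    have hg0 : 0 < gdens k V m x := gdens_pos m x
    have hxb : |x| ≤ (2 + |m₀|) * (1 + |x - m₀|) := by
      have h := abs_le_aux m₀ x
      nlinarith [abs_nonneg m₀, abs_nonneg (x - m₀), abs_nonneg x]
    calc ‖(x ^ n * (k * (x - m))) * gdens k V m x‖
        = |x| ^ n * (k * |x - m|) * gdens k V m x := by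
          rw [norm_mul, norm_mul, norm_mul, norm_pow]
          simp [Real.norm_eq_abs, abs_of_pos hg0, abs_of_pos hk]
      _ ≤ ((2 + |m₀|) * (1 + |x - m₀|)) ^ n * (k * ((2 + |m₀|) * (1 + |x - m₀|))) *
          (Real.exp (-k * C₀ + k) * Real.exp (-(k / 4) * (x - m₀) ^ 2)) := by
          apply mul_le_mul _ (gdens_le' hC₀ hk hm1 x) hg0.le (by positivity)
          apply mul_le_mul (pow_le_pow_left₀ (abs_nonneg x) hxb n)
            (mul_le_mul_of_nonneg_left hxm hk.le) (by positivity) (by positivity)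
      _ = k * ((2 + |m₀|) ^ (n + 1) * ((1 + |x - m₀|) ^ (n + 1) *
          (Real.exp (-k * C₀ + k) * Real.exp (-(k / 4) * (x - m₀) ^ 2)))) := by
          rw [mul_pow, pow_succ, pow_succ]; ring
      _ ≤ k * ((2 + |m₀|) ^ (n + 1) * ((2 ^ (n + 1) * (1 + |x - m₀| ^ (n + 1))) *
          (Real.exp (-k * C₀ + k) * Real.exp (-(k / 4) * (x - m₀) ^ 2)))) := by
          apply mul_le_mul_of_nonneg_left _ hk.le
          apply mul_le_mul_of_nonneg_left _ (by positivity)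
          apply mul_le_mul_of_nonneg_right (aux_one_add_pow_le (abs_nonneg _) (n + 1))
            (by positivity)
      _ = (k * ((2 + |m₀|) ^ (n + 1) * 2 ^ (n + 1) * Real.exp (-k * C₀ + k))) *
          ((1 + |x - m₀| ^ (n + 1)) * Real.exp (-(k / 4) * (x - m₀) ^ 2)) := by ring
  · exact (aux_int_gauss'' (by positivity : (0:ℝ) < k / 4) (n + 1) m₀).const_mul _
  · -- differentiability in m for each x
    refine Filter.Eventually.of_forall fun x => fun m _ => ?_
    have h1 : HasDerivAt (fun m : ℝ => x - m) (-1) m := (hasDerivAt_id m).const_sub x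
    have h2 : HasDerivAt (fun m : ℝ => -k * (V x + (x - m) ^ 2 / 2)) (k * (x - m)) m := by
      have h3 := ((h1.pow 2).div_const 2).const_add (V x)
      have h4 := h3.const_mul (-k)
      refine h4.congr_deriv ?_
      ring
    have h5 := h2.exp
    have h6 := h5.const_mul (x ^ n)
    have e1 : (fun m => x ^ n * Real.exp (-k * (V x + (x - m) ^ 2 / 2))) =
        fun m => x ^ n * gdens k V m x := rfl
    rw [e1] at h6
    refine h6.congr_deriv ?_
    show x ^ n * (gdens k V m x * (k * (x - m))) = (x ^ n * (k * (x - m))) * gdens k V m x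
    ring

lemma Ig_pos (hV : Continuous V) (hC₀ : ∀ x, C₀ ≤ V x) (hk : 0 < k) (m : ℝ) :
    0 < Ig k V 0 m := by
  rw [Ig]
  rw [integral_pos_iff_support_of_nonneg
    (fun x => mul_nonneg (by positivity) (gdens_pos m x).le)
    (int_xn_gdens hV hC₀ hk 0 m)]
  refine lt_of_lt_of_le ?_ (measure_mono (fun x (_ : x ∈ Ioi (0:ℝ)) => ?_))
  · rw [Real.volume_Ioi]; exact ENNReal.zero_lt_top
  · show x ^ 0 * gdens k V m x ≠ 0
    have := gdens_pos (k := k) (V := V) m x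
    positivity

lemma Ig_var_pos (hV : Continuous V) (hC₀ : ∀ x, C₀ ≤ V x) (hk : 0 < k) (m : ℝ) :
    0 < Ig k V 2 m * Ig k V 0 m - (Ig k V 1 m) ^ 2 := by
  set θ := Ig k V 1 m / Ig k V 0 m with hθdef
  have h0 := Ig_pos hV hC₀ hk m
  have e : (fun x => (x - θ) ^ 2 * gdens k V m x) =
      fun x => (x ^ 2 * gdens k V m x - (2 * θ) * (x ^ 1 * gdens k V m x)) +
        (θ ^ 2) * (x ^ 0 * gdens k V m x) := by
    funext x; ring
  have i2 := int_xn_gdens hV hC₀ hk 2 m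
  have i1 : Integrable fun x => 2 * θ * (x ^ 1 * gdens k V m x) :=
    (int_xn_gdens hV hC₀ hk 1 m).const_mul (2 * θ)
  have i0 : Integrable fun x => θ ^ 2 * (x ^ 0 * gdens k V m x) :=
    (int_xn_gdens hV hC₀ hk 0 m).const_mul (θ ^ 2)
  have isub : Integrable fun x => x ^ 2 * gdens k V m x - 2 * θ * (x ^ 1 * gdens k V m x) :=
    i2.sub i1
  have hint : Integrable fun x => (x - θ) ^ 2 * gdens k V m x := by
    rw [e]
    exact isub.add i0
  have hval : (∫ x, (x - θ) ^ 2 * gdens k V m x) =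
      Ig k V 2 m - 2 * θ * Ig k V 1 m + θ ^ 2 * Ig k V 0 m := by
    rw [e, integral_add isub i0, integral_sub i2 i1,
      integral_const_mul, integral_const_mul]
    show Ig k V 2 m - 2 * θ * _ + θ ^ 2 * _ = _
    rw [Ig, Ig, Ig]
  have hpos : 0 < ∫ x, (x - θ) ^ 2 * gdens k V m x := by
    rw [integral_pos_iff_support_of_nonneg
      (fun x => mul_nonneg (sq_nonneg _) (gdens_pos m x).le) hint]
    refine lt_of_lt_of_le ?_ (measure_mono (fun x (hx : x ∈ Ioi θ) => ?_))
    · rw [Real.volume_Ioi]; exact ENNReal.zero_lt_top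
    · show (x - θ) ^ 2 * gdens k V m x ≠ 0
      have h1 : 0 < x - θ := sub_pos.2 hx
      have := gdens_pos (k := k) (V := V) m x
      positivity
  rw [hval] at hpos
  have hθ : θ * Ig k V 0 m = Ig k V 1 m := div_mul_cancel₀ _ (ne_of_gt h0)
  have hm := mul_pos h0 hpos
  nlinarith [hm, hθ]

lemma contAt_Ig (hV : Continuous V) (hC₀ : ∀ x, C₀ ≤ V x) (hk : 0 < k) (n : ℕ) (m₀ : ℝ) :
    ContinuousAt (Ig k V n) m₀ := by
  refine continuousAt_of_dominated (bound := fun x =>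
      ((2 + |m₀|) ^ n * 2 ^ n * Real.exp (-k * C₀ + k)) *
      ((1 + |x - m₀| ^ n) * Real.exp (-(k / 4) * (x - m₀) ^ 2)))
    (Filter.Eventually.of_forall fun m =>
      ((continuous_pow n).mul (gdens_cont hV m)).aestronglyMeasurable) ?_ ?_ ?_
  · refine Filter.eventually_of_mem (Metric.ball_mem_nhds m₀ one_pos) fun m hm => ?_
    have hm1 : |m - m₀| ≤ 1 := by
      have := Metric.mem_ball.1 hm
      rw [Real.dist_eq] at this
      linarith
    exact Filter.Eventually.of_forall fun x => norm_xn_gdens_le hC₀ hk n hm1 x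
  · exact (aux_int_gauss'' (by positivity : (0:ℝ) < k / 4) n m₀).const_mul _
  · exact Filter.Eventually.of_forall fun x =>
      ((continuous_const.mul (gdens_cont' hV x)).continuousAt)

/-- The derivative of the mean-field map. -/
def Dfgen (k : ℝ) (V : ℝ → ℝ) (m : ℝ) : ℝ :=
  k * (Ig k V 2 m * Ig k V 0 m - (Ig k V 1 m) ^ 2) / (Ig k V 0 m) ^ 2

lemma Dfgen_pos (hV : Continuous V) (hC₀ : ∀ x, C₀ ≤ V x) (hk : 0 < k) (m : ℝ) :
    0 < Dfgen k V m :=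
  div_pos (mul_pos hk (Ig_var_pos hV hC₀ hk m)) (pow_pos (Ig_pos hV hC₀ hk m) 2)

lemma hasDerivAt_fgen (hV : Continuous V) (hC₀ : ∀ x, C₀ ≤ V x) (hk : 0 < k) (m₀ : ℝ) :
    HasDerivAt (fun m => Ig k V 1 m / Ig k V 0 m) (Dfgen k V m₀) m₀ := by
  have h1 := hasDerivAt_Ig hV hC₀ hk 1 m₀
  have h0 := hasDerivAt_Ig hV hC₀ hk 0 m₀
  have hne := ne_of_gt (Ig_pos hV hC₀ hk m₀)
  have := h1.fun_div h0 hne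
  refine this.congr_deriv ?_
  rw [Dfgen]
  congr 1
  ring

lemma contAt_Dfgen (hV : Continuous V) (hC₀ : ∀ x, C₀ ≤ V x) (hk : 0 < k) (m : ℝ) :
    ContinuousAt (Dfgen k V) m := by
  have h0 := contAt_Ig hV hC₀ hk 0 m
  have h1 := contAt_Ig hV hC₀ hk 1 m
  have h2 := contAt_Ig hV hC₀ hk 2 m
  have hne : (Ig k V 0 m) ^ 2 ≠ 0 := pow_ne_zero 2 (ne_of_gt (Ig_pos hV hC₀ hk m))
  exact ((continuousAt_const.mul ((h2.mul h0).sub (h1.pow 2))).div (h0.pow 2) hne)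

end core

end

lemma aux_V_lb {V : ℝ → ℝ} (hV : Continuous V) (hdV : Differentiable ℝ V) {R_V : ℝ}
    (hRV : 0 < R_V) (hg : ∀ x : ℝ, R_V ≤ |x| → 0 ≤ x * deriv V x) :
    ∃ C₀ : ℝ, ∀ x, C₀ ≤ V x := by
  obtain ⟨x₀, hx₀, hmin⟩ := isCompact_Icc.exists_isMinOn
    (nonempty_Icc.2 (by linarith : -R_V ≤ R_V)) hV.continuousOn
  have hmin' := isMinOn_iff.mp hmin
  refine ⟨V x₀, fun x => ?_⟩
  rcases le_total x (-R_V) with hx | hx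
  · have hanti : AntitoneOn V (Iic (-R_V)) := by
      apply antitoneOn_of_deriv_nonpos (convex_Iic _) hV.continuousOn hdV.differentiableOn
      intro y hy
      rw [interior_Iic] at hy
      have hy' : y < -R_V := hy
      have h1 := hg y (by rw [abs_of_neg (by linarith : y < 0)]; linarith)
      nlinarith
    calc V x₀ ≤ V (-R_V) := hmin' _ ⟨le_rfl, by linarith⟩
      _ ≤ V x := hanti (mem_Iic.2 hx) (mem_Iic.2 le_rfl) hx
  · rcases le_total x R_V with hx2 | hx2
    · exact hmin' x ⟨hx, hx2⟩
    · have hmono : MonotoneOn V (Ici R_V) := by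
        apply monotoneOn_of_deriv_nonneg (convex_Ici _) hV.continuousOn hdV.differentiableOn
        intro y hy
        rw [interior_Ici] at hy
        have hy' : R_V < y := hy
        have h1 := hg y (by rw [abs_of_pos (by linarith : 0 < y)]; linarith)
        nlinarith
      calc V x₀ ≤ V R_V := hmin' _ ⟨by linarith, le_rfl⟩
        _ ≤ V x := hmono (mem_Ici.2 le_rfl) (mem_Ici.2 hx2) hx2

lemma aux_inv_cont {f g : ℝ → ℝ} (hf : StrictMono f) (hgl : Function.LeftInverse g f)
    (hgr : Function.RightInverse g f) : Continuous g ∧ StrictMono g := by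
  have hsurj : Function.Surjective f := fun y => ⟨g y, hgr y⟩
  set e := StrictMono.orderIsoOfSurjective f hf hsurj with he
  have hcoe : ⇑e = f := StrictMono.coe_orderIsoOfSurjective f hf hsurj
  have hg : g = ⇑e.symm := by
    funext y
    apply e.injective
    rw [e.apply_symm_apply]
    calc e (g y) = f (g y) := by rw [hcoe]
      _ = y := hgr y
  constructor
  · rw [hg]; exact e.symm.toHomeomorph.continuous
  · intro u v huv
    exact (hf.lt_iff_lt).mp (by rw [hgr, hgr]; exact huv)

/-- **Proposition (properties of the modified energy `h` in dimension 1).** `h` is convex,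
Lipschitz continuous, has bounded second derivative, and vanishes on `[a, ∞)`. -/
theorem h_modified_properties_dim1
    (σ : ℝ) (hσ : 0 < σ)
    -- confining potential V
    (V Vc Vb : ℝ → ℝ) (hV : ContDiff ℝ 2 V) (hdec : ∀ x, V x = Vc x + Vb x)
    (ρ₀ : ℝ) (hρ₀ : 0 < ρ₀) (hVc : StrongConvexOn Set.univ ρ₀ Vc)
    (Mb : ℝ) (hVb : ∀ x, |Vb x| ≤ Mb)
    (β R_V θ₀ : ℝ) (hβ : 2 < β) (hRV : 0 < R_V) (hθ₀ : 0 < θ₀)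
    (hgrow : ∀ x : ℝ, R_V ≤ |x| → x * deriv V x ≥ |x| ^ β ∧ |deriv V x| ≤ |x| ^ θ₀)
    (L : ℝ) (hL : 0 < L)
    (hOS : ∀ x y : ℝ, (deriv V x - deriv V y) * (x - y) ≥ -L * (x - y) ^ 2)
    -- f is an increasing bijection with inverse finv
    (hfmono : StrictMono (fFun σ V))
    (finv : ℝ → ℝ) (hfinvL : Function.LeftInverse finv (fFun σ V))
    (hfinvR : Function.RightInverse finv (fFun σ V))
    -- κ = 1/σ²
    (κ : ℝ) (hκ : κ = 1 / σ ^ 2)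
    -- fixed points m* and m₋, and the domain D = [a, ∞)
    (mstar a : ℝ) (ha : a < mstar)
    (hfixstar : fFun σ V mstar = mstar)
    (hf'pos : 0 < deriv (fFun σ V) mstar) (hf'lt : deriv (fFun σ V) mstar < 1)
    (huniqD : ∀ m, a ≤ m → fFun σ V m = m → m = mstar)
    (mminus : ℝ) (hmminus : mminus < a) (hfixminus : fFun σ V mminus = mminus)
    (hnofixbelow : ∀ m, m < mminus → fFun σ V m ≠ m)
    (ε : ℝ) (hε : 0 < ε) (hnofixnear : ∀ m, a - ε ≤ m → m ≤ a → fFun σ V m ≠ m)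
    (a' a'' : ℝ) (ha' : a' = κ * finv a) (ha'' : a'' = κ * finv (a - ε))
    -- the modification function r and its inverse
    (r : ℝ → ℝ) (hrC2 : ContDiff ℝ 2 r) (hrmono : StrictMono r)
    (hr1 : ∀ z, a' ≤ z → r z = z)
    (hr2 : a'' ≤ r (κ * mminus))
    (hr3 : ∀ z, z ≤ κ * mminus → r z = r (κ * mminus) + z - κ * mminus)
    (hr4 : ∀ z, 0 < deriv r z ∧ deriv r z ≤ 1)
    (rinv : ℝ → ℝ) (hrinvL : Function.LeftInverse rinv r)
    (hrinvR : Function.RightInverse rinv r)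
    -- the modified interaction energy h
    (h : ℝ → ℝ)
    (hhdef : ∀ y, h y = ∫ u in mstar..y, (rinv (κ * finv u) - κ * finv u))
    :
    ConvexOn ℝ Set.univ h ∧
    (∃ K : ℝ≥0, LipschitzWith K h) ∧
    (∃ M : ℝ, ∀ y, |iteratedDeriv 2 h y| ≤ M) ∧
    (∀ y, a ≤ y → h y = 0) := by
  -- basic positivity
  have hkpos : 0 < κ := by rw [hκ]; positivity
  have hVcont : Continuous V := hV.continuous
  have hVdiff : Differentiable ℝ V := hV.differentiable (by norm_num)
  -- lower bound on V
  obtain ⟨C₀, hC₀⟩ : ∃ C₀ : ℝ, ∀ x, C₀ ≤ V x := by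
    refine aux_V_lb hVcont hVdiff hRV fun x hx => ?_
    exact le_trans (Real.rpow_nonneg (abs_nonneg x) β) (hgrow x hx).1
  -- identification of fFun with the generic moments
  have hgd : nuDens σ V = gdens κ V := by
    funext m x
    simp only [nuDens, gdens, hκ]
  have hfeq : fFun σ V = fun m => Ig κ V 1 m / Ig κ V 0 m := by
    funext m
    simp only [fFun, hgd, Ig, pow_one, pow_zero, one_mul]
  -- differentiability of f with positive derivative
  have hDf : ∀ m, HasDerivAt (fFun σ V) (Dfgen κ V m) m := fun m => by
    rw [hfeq]; exact hasDerivAt_fgen hVcont hC₀ hkpos m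
  have hDfpos : ∀ m, 0 < Dfgen κ V m := Dfgen_pos hVcont hC₀ hkpos
  -- inverse functions : continuity and monotonicity
  obtain ⟨hfinv_cont, hfinv_mono⟩ := aux_inv_cont hfmono hfinvL hfinvR
  obtain ⟨hrinv_cont, hrinv_mono⟩ := aux_inv_cont hrmono hrinvL hrinvR
  have hrdiff : Differentiable ℝ r := hrC2.differentiable (by norm_num)
  have hfinv_deriv : ∀ y, HasDerivAt finv ((Dfgen κ V (finv y))⁻¹) y := fun y =>
    HasDerivAt.of_local_left_inverse hfinv_cont.continuousAt (hDf (finv y))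
      (ne_of_gt (hDfpos (finv y))) (Filter.Eventually.of_forall hfinvR)
  have hrinv_deriv : ∀ z, HasDerivAt rinv ((deriv r (rinv z))⁻¹) z := fun z =>
    HasDerivAt.of_local_left_inverse hrinv_cont.continuousAt
      ((hrdiff (rinv z)).hasDerivAt) (ne_of_gt (hr4 (rinv z)).1)
      (Filter.Eventually.of_forall hrinvR)
  -- elementary facts about r and rinv
  have hfinv_mm : finv mminus = mminus := by
    have h1 := hfinvL mminus
    rwa [hfixminus] at h1
  have hkm_lt : κ * mminus < a' := by
    rw [ha']
    have h1 : mminus < finv a := by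
      rw [← hfinv_mm]
      exact hfinv_mono hmminus
    exact mul_lt_mul_of_pos_left h1 hkpos
  have hra' : r a' = a' := hr1 a' le_rfl
  have hlip : LipschitzWith 1 r := by
    refine lipschitzWith_of_nnnorm_deriv_le hrdiff fun x => ?_
    rw [← NNReal.coe_le_coe, coe_nnnorm, Real.norm_eq_abs, NNReal.coe_one]
    exact abs_le.2 ⟨by linarith [(hr4 x).1], (hr4 x).2⟩
  have hrz : ∀ z, z ≤ r z := by
    intro z
    rcases le_or_gt a' z with hz | hz
    · rw [hr1 z hz]
    · have hd := hlip.dist_le_mul a' z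
      rw [Real.dist_eq, Real.dist_eq, NNReal.coe_one, one_mul] at hd
      have h2 : r z ≤ a' := by
        rw [← hra']; exact hrmono.le_iff_le.2 hz.le
      rw [abs_of_nonneg (by rw [hra']; linarith)] at hd
      rw [abs_of_nonneg (by linarith)] at hd
      rw [hra'] at hd
      linarith
  have hrinv_le : ∀ z, rinv z ≤ z := fun z => by
    have h1 := hrz (rinv z); rwa [hrinvR z] at h1
  have hexpan : ∀ {z w : ℝ}, z ≤ w → w - z ≤ rinv w - rinv z := by
    intro z w hzw
    have hd := hlip.dist_le_mul (rinv w) (rinv z)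
    rw [Real.dist_eq, Real.dist_eq, NNReal.coe_one, one_mul, hrinvR, hrinvR] at hd
    have h1 : rinv z ≤ rinv w := hrinv_mono.le_iff_le.2 hzw
    rw [abs_of_nonneg (by linarith), abs_of_nonneg (by linarith)] at hd
    linarith
  have hrkm : κ * mminus ≤ r (κ * mminus) := hrz _
  have haff : ∀ z, z ≤ r (κ * mminus) → rinv z = z - r (κ * mminus) + κ * mminus := by
    intro z hz
    have harg : z - r (κ * mminus) + κ * mminus ≤ κ * mminus := by linarith
    have h1 : r (z - r (κ * mminus) + κ * mminus) = z := by rw [hr3 _ harg]; ring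
    calc rinv z = rinv (r (z - r (κ * mminus) + κ * mminus)) := by rw [h1]
      _ = z - r (κ * mminus) + κ * mminus := hrinvL _
  -- the integrand g
  set g : ℝ → ℝ := fun u => rinv (κ * finv u) - κ * finv u with hgdef
  have hfix_id : ∀ z, a' ≤ z → rinv z = z := by
    intro z hz
    conv_lhs => rw [← hr1 z hz]
    exact hrinvL z
  have hg0 : ∀ u, a ≤ u → g u = 0 := by
    intro u hu
    have h1 : a' ≤ κ * finv u := by
      rw [ha']
      exact mul_le_mul_of_nonneg_left (hfinv_mono.le_iff_le.2 hu) hkpos.le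
    rw [hgdef]
    simp only [hfix_id _ h1, sub_self]
  have hgmono : Monotone g := by
    intro u v huv
    have h1 : κ * finv u ≤ κ * finv v :=
      mul_le_mul_of_nonneg_left (hfinv_mono.le_iff_le.2 huv) hkpos.le
    have h2 := hexpan h1
    rw [hgdef]
    simp only
    linarith
  have hgub : ∀ u, g u ≤ 0 := fun u => sub_nonpos.2 (hrinv_le _)
  have hglb : ∀ u, κ * mminus - r (κ * mminus) ≤ g u := by
    intro u
    rcases le_total (κ * finv u) (r (κ * mminus)) with hz | hz
    · rw [hgdef]
      simp only
      rw [haff _ hz]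
      ring_nf
      exact le_rfl
    · have h2 := hexpan hz
      rw [show rinv (r (κ * mminus)) = κ * mminus from hrinvL _] at h2
      rw [hgdef]
      simp only
      linarith
  set B : ℝ := r (κ * mminus) - κ * mminus with hBdef
  have hB : 0 ≤ B := by rw [hBdef]; linarith
  have hgabs : ∀ u, |g u| ≤ B := fun u => abs_le.2 ⟨by linarith [hglb u], by linarith [hgub u]⟩
  -- differentiability of g
  have hgD : ∀ y, HasDerivAt g
      (((deriv r (rinv (κ * finv y)))⁻¹ - 1) * (κ * (Dfgen κ V (finv y))⁻¹)) y := by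
    intro y
    have h1 : HasDerivAt (fun u => κ * finv u) (κ * (Dfgen κ V (finv y))⁻¹) y :=
      (hfinv_deriv y).const_mul κ
    have h2 := (hrinv_deriv (κ * finv y)).comp y h1
    have h3 : HasDerivAt (fun u => rinv (κ * finv u)) ((deriv r (rinv (κ * finv y)))⁻¹ *
        (κ * (Dfgen κ V (finv y))⁻¹)) y := h2
    have h4 := h3.sub h1
    have h5 : ((deriv r (rinv (κ * finv y)))⁻¹ - 1) * (κ * (Dfgen κ V (finv y))⁻¹) =
        (deriv r (rinv (κ * finv y)))⁻¹ * (κ * (Dfgen κ V (finv y))⁻¹) -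
          κ * (Dfgen κ V (finv y))⁻¹ := by ring
    rw [hgdef, h5]
    exact h4
  have hgcont : Continuous g := continuous_iff_continuousAt.2 fun y => (hgD y).continuousAt
  -- h as integral of g
  have hheq : h = fun y => ∫ u in mstar..y, g u := funext fun y => hhdef y
  have hH : ∀ y, HasDerivAt h (g y) y := by
    intro y
    rw [hheq]
    exact (hgcont.integral_hasStrictDerivAt mstar y).hasDerivAt
  have hhdiff : Differentiable ℝ h := fun y => (hH y).differentiableAt
  have hderivh : deriv h = g := funext fun y => (hH y).deriv
  -- various derivative facts for r
  have hone_left : ∀ z, z < κ * mminus → deriv r z = 1 := by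
    intro z hz
    have hev : r =ᶠ[nhds z] fun w => w + (r (κ * mminus) - κ * mminus) :=
      Filter.eventually_of_mem (Iio_mem_nhds hz) fun w hw => by
        rw [hr3 w (le_of_lt hw)]; ring
    rw [hev.deriv_eq]
    exact ((hasDerivAt_id z).add_const _).deriv
  have hone_right : ∀ z, a' < z → deriv r z = 1 := by
    intro z hz
    have hev : r =ᶠ[nhds z] fun w => w :=
      Filter.eventually_of_mem (Ioi_mem_nhds hz) fun w hw => hr1 w (le_of_lt hw)
    rw [hev.deriv_eq]
    exact (hasDerivAt_id z).deriv
  refine ⟨?_, ?_, ?_, ?_⟩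
  · -- convexity
    refine MonotoneOn.convexOn_of_deriv convex_univ hhdiff.continuous.continuousOn
      hhdiff.differentiableOn ?_
    rw [hderivh]
    exact hgmono.monotoneOn _
  · -- Lipschitz
    refine ⟨B.toNNReal, lipschitzWith_of_nnnorm_deriv_le hhdiff fun y => ?_⟩
    rw [← NNReal.coe_le_coe, coe_nnnorm, Real.norm_eq_abs, Real.coe_toNNReal B hB, hderivh]
    exact hgabs y
  · -- bounded second derivative
    obtain ⟨w₀, hw₀mem, hw₀min⟩ := isCompact_Icc.exists_isMinOn
      (nonempty_Icc.2 hkm_lt.le) ((hrC2.continuous_deriv (by norm_num)).continuousOn)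
    have hw₀min' := isMinOn_iff.mp hw₀min
    set δ : ℝ := min (deriv r w₀) 1 with hδdef
    have hδpos : 0 < δ := lt_min (hr4 w₀).1 one_pos
    have hδ1 : δ ≤ 1 := min_le_right _ _
    have hδle : ∀ z, δ ≤ deriv r z := by
      intro z
      rcases lt_or_ge z (κ * mminus) with hz | hz
      · rw [hone_left z hz]; exact hδ1
      · rcases le_or_gt z a' with hz2 | hz2
        · exact le_trans (min_le_left _ _) (hw₀min' z ⟨hz, hz2⟩)
        · rw [hone_right z hz2]; exact hδ1
    have hJle : r (κ * mminus) / κ ≤ finv a := by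
      rw [div_le_iff₀ hkpos]
      have h1 : r (κ * mminus) ≤ a' := by
        rw [← hra']; exact hrmono.le_iff_le.2 hkm_lt.le
      rw [ha'] at h1
      linarith [mul_comm (finv a) κ]
    obtain ⟨x₀, hx₀mem, hx₀min⟩ := isCompact_Icc.exists_isMinOn
      (nonempty_Icc.2 hJle)
      (fun x _ => (contAt_Dfgen hVcont hC₀ hkpos x).continuousWithinAt)
    have hx₀min' := isMinOn_iff.mp hx₀min
    set c : ℝ := Dfgen κ V x₀ with hcdef
    have hc : 0 < c := hDfpos x₀
    have hδinv1 : (1:ℝ) ≤ δ⁻¹ := (one_le_inv₀ hδpos).2 hδ1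
    have hM0 : 0 ≤ (δ⁻¹ - 1) * (κ * c⁻¹) :=
      mul_nonneg (by linarith) (mul_nonneg hkpos.le (inv_nonneg.2 hc.le))
    refine ⟨(δ⁻¹ - 1) * (κ * c⁻¹), fun y => ?_⟩
    have hit2 : iteratedDeriv 2 h = deriv g := by
      rw [show (2:ℕ) = 1 + 1 from rfl, iteratedDeriv_succ, iteratedDeriv_one, hderivh]
    rw [hit2, (hgD y).deriv]
    rcases lt_or_ge (finv y) (r (κ * mminus) / κ) with hy1 | hy1
    · have hzlt : κ * finv y < r (κ * mminus) := by
        have h' := (lt_div_iff₀ hkpos).1 hy1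
        linarith [mul_comm (finv y) κ]
      have hrv : rinv (κ * finv y) < κ * mminus := by
        rw [haff _ hzlt.le]; linarith
      rw [hone_left _ hrv]
      simpa using hM0
    · rcases le_or_gt (finv y) (finv a) with hy2 | hy2
      · have hcy : c ≤ Dfgen κ V (finv y) := hx₀min' _ ⟨hy1, hy2⟩
        have hd1 : (Dfgen κ V (finv y))⁻¹ ≤ c⁻¹ := inv_anti₀ hc hcy
        have hA1 : (1:ℝ) ≤ (deriv r (rinv (κ * finv y)))⁻¹ :=
          (one_le_inv₀ (hr4 _).1).2 (hr4 _).2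
        have hAle : (deriv r (rinv (κ * finv y)))⁻¹ ≤ δ⁻¹ :=
          inv_anti₀ hδpos (hδle _)
        have hdpos : 0 ≤ κ * (Dfgen κ V (finv y))⁻¹ :=
          mul_nonneg hkpos.le (inv_nonneg.2 (hDfpos (finv y)).le)
        rw [abs_of_nonneg (mul_nonneg (by linarith) hdpos)]
        exact mul_le_mul (by linarith) (mul_le_mul_of_nonneg_left hd1 hkpos.le) hdpos
          (by linarith)
      · have hz : a' < κ * finv y := by
          rw [ha']; exact mul_lt_mul_of_pos_left hy2 hkpos
        have hrid : rinv (κ * finv y) = κ * finv y := hfix_id _ hz.le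
        rw [hrid, hone_right _ hz]
        simpa using hM0
  · -- vanishing on [a, ∞)
    intro y hy
    rw [hhdef y]
    rw [intervalIntegral.integral_congr (g := fun _ => (0:ℝ)) ?_]
    · simp
    · intro u hu
      have h1 : a ≤ u := le_trans (le_min ha.le hy) hu.1
      exact hg0 u h1

end
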